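/- arXiv:2509.12163 — 3 statements merged into one kernel-verified Lean document; each statement's English description precedes it below -/
import Mathlib

section
/- Let R : C → D be a functor admitting a fully faithful left adjoint L : D → C, and let S be the class of morphisms of C sent to isomorphisms by R. Then S admits a calculus of right fractions, and the induced functor C[S^{-1}] → D is an equivalence of categories. -/
open CategoryTheory

/-- Let `R : C ⥤ D` be a functor admitting a fully faithful left adjoint
`L : D ⥤ C`, and let `S` be the class of morphisms of `C` sent to isomorphisms by `R`.
Then `S` admits a calculus of right fractions, and the induced functor `C[S⁻¹] → D` is an
equivalence (i.e. `R` exhibits `D` as the localization of `C` at `S`). -/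
theorem stmt_9 (C D : Type*) [Category C] [Category D]
    (R : C ⥤ D) (L : D ⥤ C) (adj : L ⊣ R) [L.Full] [L.Faithful] :
    ((MorphismProperty.isomorphisms D).inverseImage R).HasRightCalculusOfFractions ∧
      R.IsLocalization ((MorphismProperty.isomorphisms D).inverseImage R) :=
  ⟨adj.hasRightCalculusOfFractions', adj.isLocalization_rightAdjoint'⟩
end

section
/- Let C be a small K-linear category and Pre(C) = Func(C^op, Vec_K) its category of presheaves. Let {X_i}_{i ∈ S} be a family of representable presheaves with the property that for every object A of C, Hom_{Pre(C)}(Yoneda(A), X_i) ≠ 0 for only finitely many i ∈ S. Then the canonical morphism from the coproduct ∐_{i∈S} X_i to the product ∏_{i∈S} X_i (given by identity components on the diagonal and zero off it) is an isomorphism; hence this coproduct is a biproduct. -/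
/-!
Limits and colimits of presheaves are computed objectwise, so it suffices to invert the
canonical map `∐ Xᵢ(b) ⟶ ∏ Xᵢ(b)` for each object `b`. There `Xᵢ(b) = Hom(b, Aᵢ)`, and a nonzero
`g : b ⟶ Aᵢ` gives the nonzero morphism `Yoneda(g)`, so only finitely many `Xᵢ(b)` are nonzero.
In a preadditive category, a family with finitely many nonzero members has `∑ₖ πₖ ≫ ιₖ`
(over that finite support) as inverse of the canonical map.
-/

open CategoryTheory CategoryTheory.Limits

section SigmaToPi

variable {D : Type*} [Category D] {ι : Type*} [DecidableEq ι] (M : ι → D)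

noncomputable def sigmaToPi [HasZeroMorphisms D] [HasCoproduct M] [HasProduct M] : ∐ M ⟶ ∏ᶜ M :=
  Sigma.desc fun i => Pi.lift fun j => if h : i = j then eqToHom (congrArg M h) else 0

@[simp]
lemma ι_sigmaToPi_π [HasZeroMorphisms D] [HasCoproduct M] [HasProduct M] (i j : ι) :
    Sigma.ι M i ≫ sigmaToPi M ≫ Pi.π M j = if h : i = j then eqToHom (congrArg M h) else 0 := by
  simp [sigmaToPi]

lemma isIso_sigmaToPi_of_finite [Preadditive D] [HasCoproduct M] [HasProduct M]
    (hM : {i | ¬IsZero (M i)}.Finite) : IsIso (sigmaToPi M) := by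
  refine ⟨∑ k ∈ hM.toFinset, Pi.π M k ≫ Sigma.ι M k, Sigma.hom_ext _ _ fun i => ?_, Pi.hom_ext _ _ fun j => ?_⟩
  · by_cases hi : IsZero (M i)
    · exact hi.eq_of_src _ _
    rw [← Category.assoc, Category.comp_id, Preadditive.comp_sum,
      Finset.sum_eq_single_of_mem i (by simpa using hi)]
    · simp only [← Category.assoc]
      simp
    · intro k _ hk
      simp only [← Category.assoc]
      simp [Ne.symm hk]
  · by_cases hj : IsZero (M j)
    · exact hj.eq_of_tgt _ _
    rw [Category.assoc, Category.id_comp, Preadditive.sum_comp,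
      Finset.sum_eq_single_of_mem j (by simpa using hj)]
    · simp
    · intro k _ hk
      simp [hk]

lemma sigmaComparison_map_sigmaToPi_piComparison {E : Type*} [Category E] [HasZeroMorphisms D]
    [HasZeroMorphisms E] (G : D ⥤ E) [G.PreservesZeroMorphisms] [HasCoproduct M] [HasProduct M]
    [HasCoproduct fun i => G.obj (M i)] [HasProduct fun i => G.obj (M i)] :
    sigmaComparison G M ≫ G.map (sigmaToPi M) ≫ piComparison G M =
      sigmaToPi fun i => G.obj (M i) := by
  refine Sigma.hom_ext _ _ fun i => Pi.hom_ext _ _ fun j => ?_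
  simp only [Category.assoc, piComparison_comp_π, ι_comp_sigmaComparison_assoc, ι_sigmaToPi_π,
    ← G.map_comp]
  split_ifs with h
  · subst h; simp
  · simp

lemma isIso_map_sigmaToPi {E : Type*} [Category E] [HasZeroMorphisms D] [HasZeroMorphisms E]
    (G : D ⥤ E) [G.PreservesZeroMorphisms] [HasCoproduct M] [HasProduct M]
    [PreservesColimit (Discrete.functor M) G] [PreservesLimit (Discrete.functor M) G]
    [HasCoproduct fun i => G.obj (M i)] [HasProduct fun i => G.obj (M i)]
    [IsIso (sigmaToPi fun i => G.obj (M i))] : IsIso (G.map (sigmaToPi M)) := by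
  have : G.map (sigmaToPi M) =
      inv (sigmaComparison G M) ≫ (sigmaToPi fun i => G.obj (M i)) ≫ inv (piComparison G M) := by
    simp [← sigmaComparison_map_sigmaToPi_piComparison]
  rw [this]
  infer_instance

end SigmaToPi

lemma exists_linearYoneda_hom_ne_zero {K : Type*} [Field K] {C : Type*} [Category C]
    [Preadditive C] [Linear K C] {A B : C} (h : ¬IsZero (((linearYoneda K C).obj A).obj (Opposite.op B))) :
    ∃ f : (linearYoneda K C).obj B ⟶ (linearYoneda K C).obj A, f ≠ 0 := by
  rw [ModuleCat.isZero_iff_subsingleton, not_subsingleton_iff_nontrivial] at h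
  have : Nontrivial (B ⟶ A) := h
  obtain ⟨g, hg⟩ := exists_ne (0 : B ⟶ A)
  refine ⟨(linearYoneda K C).map g, fun h0 => hg ?_⟩
  have : 𝟙 B ≫ g = 0 := congr(($h0).app (Opposite.op B) (𝟙 B))
  simpa using this

/-- Let `C` be a small `K`-linear category and `Pre(C) = Func(Cᵒᵖ, Vec_K)`
its presheaf category.  Let `(X i)_{i ∈ S}` be a family of representable presheaves such that
for every object `B` of `C` only finitely many `i` admit a nonzero morphism
`Yoneda(B) ⟶ X i`.  Then the canonical morphism `∐ X i ⟶ ∏ X i` (identity components on the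
diagonal, zero off it) is an isomorphism; hence the coproduct is a biproduct. -/
theorem stmt_10 (K : Type) [Field K] (C : Type) [SmallCategory C]
    [Preadditive C] [CategoryTheory.Linear K C]
    (S : Type) [DecidableEq S] (A : S → C)
    (X : S → (Cᵒᵖ ⥤ ModuleCat K))
    (hX : ∀ i, X i = (linearYoneda K C).obj (A i))
    (hfin : ∀ B : C, {i : S | ∃ f : (linearYoneda K C).obj B ⟶ X i, f ≠ 0}.Finite) :
    IsIso (Sigma.desc (f := X) fun i => Pi.lift (f := X) fun j =>
      if h : i = j then eqToHom (congrArg X h) else 0) := by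
  have (b : Cᵒᵖ) : IsIso ((sigmaToPi X).app b) := by
    let G := (evaluation Cᵒᵖ (ModuleCat K)).obj b
    have : IsIso (sigmaToPi fun i => G.obj (X i)) := by
      refine isIso_sigmaToPi_of_finite _ ((hfin b.unop).subset fun i hi => ?_)
      rw [Set.mem_ofPred_eq, hX] at hi ⊢
      exact exists_linearYoneda_hom_ne_zero hi
    exact isIso_map_sigmaToPi X G
  exact NatIso.isIso_of_isIso_app (sigmaToPi X)
end

section
/- Let C be a symmetrizable generalized Cartan matrix, B(C) the quantum boson algebra, and B_Z(C) the bosonic extension. The assignment E_i ↦ E_{i,0} and F_i ↦ E_{i,1} extends to a well-defined Q(q)-algebra homomorphism B(C) → B_Z(C). -/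
noncomputable section

open scoped BigOperators

/-- The field `ℚ(q)`. -/
abbrev QF : Type := RatFunc ℚ

/-- The quantum integer `[n]_t = (tⁿ - t⁻ⁿ)/(t - t⁻¹)`. -/
def qInt (t : QF) (n : ℕ) : QF := (t ^ n - t⁻¹ ^ n) / (t - t⁻¹)

/-- The quantum factorial `[n]_t!`. -/
def qFact (t : QF) (n : ℕ) : QF := ∏ m ∈ Finset.range n, qInt t (m + 1)

/-- The quantum binomial coefficient `binom(n, m)_t`. -/
def qBinom (t : QF) (n m : ℕ) : QF := qFact t n / (qFact t m * qFact t (n - m))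

variable {I : Type}

/-- The quantum Serre element
`∑_{m=0}^{1-C_{ij}} (-1)^m binom(1-C_{ij}, m)_{q_i} e_i^m e_j e_i^{1-C_{ij}-m}`
attached to a family `e` of elements of a `ℚ(q)`-algebra `A`. -/
def serreElem (A : Type) [Ring A] [Algebra QF A] (C : I → I → ℤ) (d : I → ℕ)
    (e : I → A) (i j : I) : A :=
  ∑ m ∈ Finset.range ((1 - C i j).toNat + 1),
    (((-1 : QF) ^ m * qBinom (RatFunc.X ^ d i) (1 - C i j).toNat m) •
      (e i ^ m * e j * e i ^ ((1 - C i j).toNat - m)))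

/-- The defining relations of the quantum boson algebra `B(C)`: quantum Serre relations for
the `E_i` and the `F_i` (generators `Sum.inl i` and `Sum.inr i` respectively), and the
quantum boson relations `F_i E_j = q_i^{-C_{ij}} E_j F_i + δ_{ij}/(1-q_i²)`. -/
inductive BosonRel (C : I → I → ℤ) (d : I → ℕ) [DecidableEq I] :
    FreeAlgebra QF (I ⊕ I) → FreeAlgebra QF (I ⊕ I) → Prop
  | serreE (i j : I) (h : i ≠ j) :
      BosonRel C d
        (serreElem (FreeAlgebra QF (I ⊕ I)) C d (fun l => FreeAlgebra.ι QF (Sum.inl l)) i j) 0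
  | serreF (i j : I) (h : i ≠ j) :
      BosonRel C d
        (serreElem (FreeAlgebra QF (I ⊕ I)) C d (fun l => FreeAlgebra.ι QF (Sum.inr l)) i j) 0
  | boson (i j : I) :
      BosonRel C d
        (FreeAlgebra.ι QF (Sum.inr i) * FreeAlgebra.ι QF (Sum.inl j))
        ((((RatFunc.X ^ d i : QF) ^ (-(C i j))) •
            (FreeAlgebra.ι QF (Sum.inl j) * FreeAlgebra.ι QF (Sum.inr i)))
          + (if i = j then (1 - (RatFunc.X ^ d i : QF) ^ 2)⁻¹ else 0) • 1)

/-- The quantum boson algebra `B(C)`. -/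
def BosonAlg (C : I → I → ℤ) (d : I → ℕ) [DecidableEq I] := RingQuot (BosonRel C d)

instance (C : I → I → ℤ) (d : I → ℕ) [DecidableEq I] : Ring (BosonAlg C d) :=
  inferInstanceAs (Ring (RingQuot (BosonRel C d)))

instance (C : I → I → ℤ) (d : I → ℕ) [DecidableEq I] : Algebra QF (BosonAlg C d) :=
  inferInstanceAs (Algebra QF (RingQuot (BosonRel C d)))

/-- The generator `E_i` of `B(C)`. -/
def bE (C : I → I → ℤ) (d : I → ℕ) [DecidableEq I] (i : I) : BosonAlg C d :=
  RingQuot.mkAlgHom QF (BosonRel C d) (FreeAlgebra.ι QF (Sum.inl i))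

/-- The generator `F_i` of `B(C)`. -/
def bF (C : I → I → ℤ) (d : I → ℕ) [DecidableEq I] (i : I) : BosonAlg C d :=
  RingQuot.mkAlgHom QF (BosonRel C d) (FreeAlgebra.ι QF (Sum.inr i))

/-- The defining relations of the bosonic extension `B_ℤ(C)`: quantum Serre relations among
the `E_{i,n}` for each fixed `n`, and the relations
`E_{i,n+m} E_{j,n} = q_i^{(-1)^m C_{ij}} E_{j,n} E_{i,n+m} + δ_{(i,j),(m,1)}/(1-q_i²)`
for `m ≥ 1`. -/
inductive BosonZRel (C : I → I → ℤ) (d : I → ℕ) [DecidableEq I] :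
    FreeAlgebra QF (I × ℤ) → FreeAlgebra QF (I × ℤ) → Prop
  | serre (n : ℤ) (i j : I) (h : i ≠ j) :
      BosonZRel C d
        (serreElem (FreeAlgebra QF (I × ℤ)) C d (fun l => FreeAlgebra.ι QF (l, n)) i j) 0
  | boson (i j : I) (n : ℤ) (m : ℕ) (h : 1 ≤ m) :
      BosonZRel C d
        (FreeAlgebra.ι QF (i, n + m) * FreeAlgebra.ι QF (j, n))
        ((((RatFunc.X ^ d i : QF) ^ ((-1 : ℤ) ^ m * C i j)) •
            (FreeAlgebra.ι QF (j, n) * FreeAlgebra.ι QF (i, n + m)))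
          + (if i = j ∧ m = 1 then (1 - (RatFunc.X ^ d i : QF) ^ 2)⁻¹ else 0) • 1)

/-- The bosonic extension `B_ℤ(C)`. -/
def BosonZAlg (C : I → I → ℤ) (d : I → ℕ) [DecidableEq I] := RingQuot (BosonZRel C d)

instance (C : I → I → ℤ) (d : I → ℕ) [DecidableEq I] : Ring (BosonZAlg C d) :=
  inferInstanceAs (Ring (RingQuot (BosonZRel C d)))

instance (C : I → I → ℤ) (d : I → ℕ) [DecidableEq I] : Algebra QF (BosonZAlg C d) :=
  inferInstanceAs (Algebra QF (RingQuot (BosonZRel C d)))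

/-- The generator `E_{i,n}` of `B_ℤ(C)`. -/
def bzE (C : I → I → ℤ) (d : I → ℕ) [DecidableEq I] (i : I) (n : ℤ) : BosonZAlg C d :=
  RingQuot.mkAlgHom QF (BosonZRel C d) (FreeAlgebra.ι QF (i, n))

theorem map_serreElem {A B : Type} [Ring A] [Algebra QF A] [Ring B] [Algebra QF B]
    (ψ : A →ₐ[QF] B) (C : I → I → ℤ) (d : I → ℕ) (e : I → A) (i j : I) :
    ψ (serreElem A C d e i j) = serreElem B C d (fun l => ψ (e l)) i j := by
  simp [serreElem, map_sum]

section BosonZRelations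

variable [DecidableEq I] (C : I → I → ℤ) (d : I → ℕ)

theorem serreElem_bzE (n : ℤ) {i j : I} (hij : i ≠ j) :
    serreElem (BosonZAlg C d) C d (fun l => bzE C d l n) i j = 0 := by
  have h := RingQuot.mkAlgHom_rel QF (BosonZRel.serre (C := C) (d := d) n i j hij)
  rwa [map_serreElem, map_zero] at h

theorem bzE_mul_bzE (i j : I) (n : ℤ) {m : ℕ} (hm : 1 ≤ m) :
    bzE C d i (n + m) * bzE C d j n =
      ((RatFunc.X ^ d i : QF) ^ ((-1 : ℤ) ^ m * C i j)) • (bzE C d j n * bzE C d i (n + m))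
        + (if i = j ∧ m = 1 then (1 - (RatFunc.X ^ d i : QF) ^ 2)⁻¹ else 0) • 1 := by
  have h := RingQuot.mkAlgHom_rel QF (BosonZRel.boson (C := C) (d := d) i j n m hm)
  rwa [map_mul, map_add, map_smul, map_mul, map_smul, map_one] at h

theorem bzE_one_mul_bzE_zero (i j : I) :
    bzE C d i 1 * bzE C d j 0 =
      ((RatFunc.X ^ d i : QF) ^ (-(C i j))) • (bzE C d j 0 * bzE C d i 1)
        + (if i = j then (1 - (RatFunc.X ^ d i : QF) ^ 2)⁻¹ else 0) • 1 := by
  simpa using bzE_mul_bzE C d i j 0 le_rfl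

end BosonZRelations

namespace BosonAlg

variable [DecidableEq I] {C : I → I → ℤ} {d : I → ℕ} {A : Type} [Ring A] [Algebra QF A]
  (e f : I → A) (hE : ∀ i j, i ≠ j → serreElem A C d e i j = 0)
  (hF : ∀ i j, i ≠ j → serreElem A C d f i j = 0)
  (hFE : ∀ i j, f i * e j = ((RatFunc.X ^ d i : QF) ^ (-(C i j))) • (e j * f i)
    + (if i = j then (1 - (RatFunc.X ^ d i : QF) ^ 2)⁻¹ else 0) • 1)

def lift : BosonAlg C d →ₐ[QF] A :=
  RingQuot.liftAlgHom QF ⟨FreeAlgebra.lift QF (Sum.elim e f), fun x y h => by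
    induction h with
    | serreE i j hij => simpa [map_serreElem] using hE i j hij
    | serreF i j hij => simpa [map_serreElem] using hF i j hij
    | boson i j =>
      simp only [map_mul, map_add, map_smul, map_one, FreeAlgebra.lift_ι_apply, Sum.elim_inl,
        Sum.elim_inr]
      exact hFE i j⟩

@[simp]
theorem lift_bE (i : I) : lift e f hE hF hFE (bE C d i) = e i :=
  (RingQuot.liftAlgHom_mkAlgHom_apply QF _ _ _).trans (FreeAlgebra.lift_ι_apply _ _)

@[simp]
theorem lift_bF (i : I) : lift e f hE hF hFE (bF C d i) = f i :=
  (RingQuot.liftAlgHom_mkAlgHom_apply QF _ _ _).trans (FreeAlgebra.lift_ι_apply _ _)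

end BosonAlg

theorem stmt_13_general [DecidableEq I] (C : I → I → ℤ) (d : I → ℕ) :
    ∃ φ : BosonAlg C d →ₐ[QF] BosonZAlg C d,
      (∀ i, φ (bE C d i) = bzE C d i 0) ∧ (∀ i, φ (bF C d i) = bzE C d i 1) :=
  have hE := fun _ _ => serreElem_bzE C d 0
  have hF := fun _ _ => serreElem_bzE C d 1
  have hFE := bzE_one_mul_bzE_zero C d
  ⟨BosonAlg.lift _ _ hE hF hFE, BosonAlg.lift_bE _ _ hE hF hFE, BosonAlg.lift_bF _ _ hE hF hFE⟩

theorem stmt_13 [DecidableEq I] (C : I → I → ℤ) (d : I → ℕ)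
    (hC2 : ∀ i, C i i = 2) (hCneg : ∀ i j, i ≠ j → C i j ≤ 0)
    (hC0 : ∀ i j, C i j = 0 ↔ C j i = 0)
    (hd : ∀ i, 0 < d i)
    (hsym : ∀ i j, (d i : ℤ) * C i j = (d j : ℤ) * C j i) :
    ∃ φ : BosonAlg C d →ₐ[QF] BosonZAlg C d,
      (∀ i, φ (bE C d i) = bzE C d i 0) ∧ (∀ i, φ (bF C d i) = bzE C d i 1) :=
  stmt_13_general C d

end
end
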